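/- The manifold M = (R^{2k+l}, g) with g(∂x_i,∂x_j) = -2ψ_{ij}(y), g(∂y_a,∂y_b) = C_{ab}, g(∂x_i,∂xbar_i) = 1, is Einstein if and only if C^{ab} ∂y_a ∂y_b ψ_{ij} = 0 for all 1 ≤ i,j ≤ k (Einstein summation over a,b). -/

import Mathlib

noncomputable section

open Finset in
/-- Partial derivative in the `i`-th coordinate direction. -/
def pd {ι : Type*} [Fintype ι] [DecidableEq ι]
    (i : ι) (f : (ι → ℝ) → ℝ) (p : ι → ℝ) : ℝ :=
  fderiv ℝ f p (Pi.single i 1)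

/-- Christoffel symbols of the second kind `Γ^k_{ij}` of the metric `g`
(with inverse metric `ginv`). -/
def christoffel {ι : Type*} [Fintype ι] [DecidableEq ι]
    (g ginv : (ι → ℝ) → Matrix ι ι ℝ) (k i j : ι) (p : ι → ℝ) : ℝ :=
  (1 / 2) * ∑ l, ginv p k l *
    (pd i (fun q => g q j l) p + pd j (fun q => g q i l) p - pd l (fun q => g q i j) p)

/-- Components of the curvature operator of the Levi-Civita connection:
`R(∂_i,∂_j)∂_k = ∑_l (curvOp g ginv i j k l) ∂_l`. -/
def curvOp {ι : Type*} [Fintype ι] [DecidableEq ι]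
    (g ginv : (ι → ℝ) → Matrix ι ι ℝ) (i j k l : ι) (p : ι → ℝ) : ℝ :=
  pd i (christoffel g ginv l j k) p - pd j (christoffel g ginv l i k) p
    + ∑ m, christoffel g ginv l i m p * christoffel g ginv m j k p
    - ∑ m, christoffel g ginv l j m p * christoffel g ginv m i k p

/-- The curvature operator extended multilinearly to tangent vectors:
component `l` of `R(v,w)u`. -/
def curvVec {ι : Type*} [Fintype ι] [DecidableEq ι]
    (g ginv : (ι → ℝ) → Matrix ι ι ℝ) (p : ι → ℝ) (v w u : ι → ℝ) : ι → ℝ :=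
  fun l => ∑ i, ∑ j, ∑ k, v i * w j * u k * curvOp g ginv i j k l p

/-- The polarized Jacobi operator `J(v,w)u = (1/2){R(u,v)w + R(u,w)v}`. -/
def jacobiVec {ι : Type*} [Fintype ι] [DecidableEq ι]
    (g ginv : (ι → ℝ) → Matrix ι ι ℝ) (p : ι → ℝ) (v w u : ι → ℝ) : ι → ℝ :=
  fun l => (1 / 2) * (curvVec g ginv p u v w l + curvVec g ginv p u w v l)

/-- The Ricci tensor `Ric_{ij} = Tr (z ↦ R(z,∂_i)∂_j)`. -/
def ricci {ι : Type*} [Fintype ι] [DecidableEq ι]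
    (g ginv : (ι → ℝ) → Matrix ι ι ℝ) (i j : ι) (p : ι → ℝ) : ℝ :=
  ∑ m, curvOp g ginv m i j m p

/-- The Ricci operator (Ricci tensor with one index raised by `g`), as a matrix:
`rho(∂_j) = ∑_i (ricciOp p) i j ∂_i`. -/
def ricciOp {ι : Type*} [Fintype ι] [DecidableEq ι]
    (g ginv : (ι → ℝ) → Matrix ι ι ℝ) (p : ι → ℝ) : Matrix ι ι ℝ :=
  fun i j => ∑ m, ginv p i m * ricci g ginv m j p

/-- The (0,4) curvature tensor `R_{ijkl} = g(R(∂_i,∂_j)∂_k, ∂_l)`. -/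
def curv4 {ι : Type*} [Fintype ι] [DecidableEq ι]
    (g ginv : (ι → ℝ) → Matrix ι ι ℝ) (i j k l : ι) (p : ι → ℝ) : ℝ :=
  ∑ m, curvOp g ginv i j k m p * g p m l

/-- The metric of Definition 1.1: coordinates `(x, y, x̄)` indexed by
`Fin k ⊕ (Fin l ⊕ Fin k)`, with `g(∂xᵢ,∂xⱼ) = -2ψᵢⱼ(y)`, `g(∂yₐ,∂y_b) = C_{ab}`,
`g(∂xᵢ,∂x̄ᵢ) = 1`. -/
def gPsi (k l : ℕ) (ψ : (Fin l → ℝ) → Matrix (Fin k) (Fin k) ℝ)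
    (C : Matrix (Fin l) (Fin l) ℝ) (p : (Fin k ⊕ (Fin l ⊕ Fin k)) → ℝ) :
    Matrix (Fin k ⊕ (Fin l ⊕ Fin k)) (Fin k ⊕ (Fin l ⊕ Fin k)) ℝ :=
  fun a b => match a, b with
    | .inl i, .inl j => -2 * ψ (fun c => p (.inr (.inl c))) i j
    | .inr (.inl a), .inr (.inl b) => C a b
    | .inl i, .inr (.inr j) => if i = j then 1 else 0
    | .inr (.inr i), .inl j => if i = j then 1 else 0
    | _, _ => 0

namespace S12

abbrev Idx (k l : ℕ) := Fin k ⊕ (Fin l ⊕ Fin k)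

variable {k l : ℕ}

/-- projection onto the `y` coordinates, as a CLM -/
def L (k l : ℕ) : ((Idx k l → ℝ) →L[ℝ] (Fin l → ℝ)) :=
  ContinuousLinearMap.pi fun c => ContinuousLinearMap.proj (Sum.inr (Sum.inl c))

lemma L_apply (q : Idx k l → ℝ) : L k l q = fun c => q (.inr (.inl c)) := rfl

lemma L_single_x (i : Fin k) : L k l (Pi.single (Sum.inl i) 1) = 0 := by
  funext c; simp [L, Pi.single_apply]

lemma L_single_y (a : Fin l) : L k l (Pi.single (Sum.inr (Sum.inl a)) 1) = Pi.single a 1 := by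
  funext c; simp [L, Pi.single_apply]

lemma L_single_xb (i : Fin k) : L k l (Pi.single (Sum.inr (Sum.inr i)) 1) = 0 := by
  funext c; simp [L, Pi.single_apply]

lemma pd_const (d : Idx k l) (c : ℝ) (p : Idx k l → ℝ) : pd d (fun _ => c) p = 0 := by
  simp [pd]

lemma pd_comp (f : (Fin l → ℝ) → ℝ) (hf : Differentiable ℝ f) (d : Idx k l) (p : Idx k l → ℝ) :
    pd d (fun q => f (L k l q)) p = fderiv ℝ f (L k l p) (L k l (Pi.single d 1)) := by
  unfold pd
  have h : (fun q => f (L k l q)) = f ∘ (L k l) := rfl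
  rw [h, fderiv_comp _ (hf _) (L k l).differentiableAt, (L k l).fderiv]
  rfl


variable (ψ : (Fin l → ℝ) → Matrix (Fin k) (Fin k) ℝ)
variable (C Cinv : Matrix (Fin l) (Fin l) ℝ)

/-- first `y`-derivative of `ψ i j` -/
def dψ (a : Fin l) (i j : Fin k) (y : Fin l → ℝ) : ℝ :=
  fderiv ℝ (fun w => ψ w i j) y (Pi.single a 1)

/-- explicit inverse metric -/
def GinvM (p : Idx k l → ℝ) : Matrix (Idx k l) (Idx k l) ℝ :=
  fun a b => match a, b with
    | .inl i, .inr (.inr j) => if i = j then 1 else 0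
    | .inr (.inl a), .inr (.inl b) => Cinv a b
    | .inr (.inr i), .inl j => if i = j then 1 else 0
    | .inr (.inr i), .inr (.inr j) => 2 * ψ (fun c => p (.inr (.inl c))) i j
    | _, _ => 0

lemma g_mul_GinvM (hC : C * Cinv = 1) (p : Idx k l → ℝ) :
    gPsi k l ψ C p * GinvM ψ Cinv p = 1 := by
  have hCe : ∀ a b, ∑ e, C a e * Cinv e b = (1 : Matrix (Fin l) (Fin l) ℝ) a b := by
    intro a b; rw [← Matrix.mul_apply, hC]
  ext a b
  rw [Matrix.mul_apply, Fintype.sum_sum_type, Fintype.sum_sum_type]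
  rcases a with i | (a' | i) <;> rcases b with j | (b' | j) <;>
    simp [gPsi, GinvM, Matrix.one_apply, Finset.sum_ite_eq, Finset.sum_ite_eq',
      mul_comm, hCe, eq_comm]

lemma ginv_eq (hC : C * Cinv = 1)
    (ginv : (Idx k l → ℝ) → Matrix (Idx k l) (Idx k l) ℝ)
    (hginv : ∀ p, gPsi k l ψ C p * ginv p = 1 ∧ ginv p * gPsi k l ψ C p = 1)
    (p : Idx k l → ℝ) : ginv p = GinvM ψ Cinv p := by
  calc ginv p = ginv p * (gPsi k l ψ C p * GinvM ψ Cinv p) := by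
        rw [g_mul_GinvM ψ C Cinv hC, mul_one]
    _ = (ginv p * gPsi k l ψ C p) * GinvM ψ Cinv p := by rw [mul_assoc]
    _ = GinvM ψ Cinv p := by rw [(hginv p).2, one_mul]

/- derivatives of metric entries -/

lemma pd_g_xx (hψ : ∀ i j, Differentiable ℝ fun y => ψ y i j) (d : Idx k l) (i j : Fin k)
    (p : Idx k l → ℝ) :
    pd d (fun q => gPsi k l ψ C q (.inl i) (.inl j)) p
      = -2 * fderiv ℝ (fun y => ψ y i j) (L k l p) (L k l (Pi.single d 1)) := by
  have h : (fun q : Idx k l → ℝ => gPsi k l ψ C q (.inl i) (.inl j))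
      = fun q => (fun y => -2 * ψ y i j) (L k l q) := rfl
  rw [h, pd_comp _ ((hψ i j).const_mul (-2)) d p, fderiv_const_mul ((hψ i j) _)]
  simp

lemma pd_g_xx_y (hψ : ∀ i j, Differentiable ℝ fun y => ψ y i j) (e : Fin l) (i j : Fin k)
    (p : Idx k l → ℝ) :
    pd (Sum.inr (Sum.inl e)) (fun q => gPsi k l ψ C q (.inl i) (.inl j)) p
      = -2 * dψ ψ e i j (L k l p) := by
  rw [pd_g_xx ψ C hψ, L_single_y]; rfl

lemma pd_g_xx_x (hψ : ∀ i j, Differentiable ℝ fun y => ψ y i j) (e : Fin k) (i j : Fin k)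
    (p : Idx k l → ℝ) :
    pd (Sum.inl e) (fun q => gPsi k l ψ C q (.inl i) (.inl j)) p = 0 := by
  rw [pd_g_xx ψ C hψ, L_single_x]; simp

lemma pd_g_xx_xb (hψ : ∀ i j, Differentiable ℝ fun y => ψ y i j) (e : Fin k) (i j : Fin k)
    (p : Idx k l → ℝ) :
    pd (Sum.inr (Sum.inr e)) (fun q => gPsi k l ψ C q (.inl i) (.inl j)) p = 0 := by
  rw [pd_g_xx ψ C hψ, L_single_xb]; simp

lemma pd_g_xy (d : Idx k l) (i : Fin k) (b : Fin l) (p : Idx k l → ℝ) :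
    pd d (fun q => gPsi k l ψ C q (.inl i) (.inr (.inl b))) p = 0 := pd_const d 0 p

lemma pd_g_yx (d : Idx k l) (b : Fin l) (i : Fin k) (p : Idx k l → ℝ) :
    pd d (fun q => gPsi k l ψ C q (.inr (.inl b)) (.inl i)) p = 0 := pd_const d 0 p

lemma pd_g_yy (d : Idx k l) (a b : Fin l) (p : Idx k l → ℝ) :
    pd d (fun q => gPsi k l ψ C q (.inr (.inl a)) (.inr (.inl b))) p = 0 := pd_const d _ p

lemma pd_g_xxb (d : Idx k l) (i j : Fin k) (p : Idx k l → ℝ) :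
    pd d (fun q => gPsi k l ψ C q (.inl i) (.inr (.inr j))) p = 0 := pd_const d _ p

lemma pd_g_xbx (d : Idx k l) (i j : Fin k) (p : Idx k l → ℝ) :
    pd d (fun q => gPsi k l ψ C q (.inr (.inr i)) (.inl j)) p = 0 := pd_const d _ p

lemma pd_g_yxb (d : Idx k l) (b : Fin l) (i : Fin k) (p : Idx k l → ℝ) :
    pd d (fun q => gPsi k l ψ C q (.inr (.inl b)) (.inr (.inr i))) p = 0 := pd_const d 0 p

lemma pd_g_xby (d : Idx k l) (i : Fin k) (b : Fin l) (p : Idx k l → ℝ) :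
    pd d (fun q => gPsi k l ψ C q (.inr (.inr i)) (.inr (.inl b))) p = 0 := pd_const d 0 p

lemma pd_g_xbxb (d : Idx k l) (i j : Fin k) (p : Idx k l → ℝ) :
    pd d (fun q => gPsi k l ψ C q (.inr (.inr i)) (.inr (.inr j))) p = 0 := pd_const d 0 p


/-- explicit Christoffel symbols -/
def Γe (m i j : Idx k l) : (Idx k l → ℝ) → ℝ :=
  match m, i, j with
  | .inr (.inl b), .inl i, .inl j => fun p => ∑ a, Cinv b a * dψ ψ a i j (L k l p)
  | .inr (.inr m), .inl i, .inr (.inl a) => fun p => -(dψ ψ a i m (L k l p))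
  | .inr (.inr m), .inr (.inl a), .inl j => fun p => -(dψ ψ a j m (L k l p))
  | _, _, _ => fun _ => 0

lemma christoffel_eq (hψ : ∀ i j, Differentiable ℝ fun y => ψ y i j)
    (ginv : (Idx k l → ℝ) → Matrix (Idx k l) (Idx k l) ℝ)
    (hg : ∀ p, ginv p = GinvM ψ Cinv p) (m i j : Idx k l) (p : Idx k l → ℝ) :
    christoffel (gPsi k l ψ C) ginv m i j p = Γe ψ Cinv m i j p := by
  unfold christoffel
  simp only [hg]
  rw [Fintype.sum_sum_type, Fintype.sum_sum_type]
  rcases m with m | (b | m) <;> rcases i with i | (a | i) <;> rcases j with j | (a' | j) <;>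
    simp [GinvM, Γe, pd_g_xx_x ψ C hψ, pd_g_xx_y ψ C hψ, pd_g_xx_xb ψ C hψ,
      pd_g_xy, pd_g_yx, pd_g_yy, pd_g_xxb, pd_g_xbx, pd_g_yxb, pd_g_xby, pd_g_xbxb,
      Finset.mul_sum, mul_comm, mul_assoc, mul_left_comm]


lemma Γe_diag (m j : Idx k l) : Γe ψ Cinv m m j = fun _ => 0 := by
  rcases m with m | (b | m) <;> rfl

lemma Γe_mul (m i j n : Idx k l) (p : Idx k l → ℝ) :
    Γe ψ Cinv m i n p * Γe ψ Cinv n m j p = 0 := by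
  rcases m with m | (b | m) <;> rcases i with i | (a | i) <;> rcases j with j | (a' | j) <;>
    rcases n with n | (b' | n) <;> simp [Γe]

variable (hψs : ∀ i j, ContDiff ℝ (⊤ : ℕ∞) (fun y => ψ y i j))

include hψs in
lemma dψ_diff (a : Fin l) (i j : Fin k) : Differentiable ℝ (dψ ψ a i j) :=
  (((hψs i j).fderiv_right (m := (⊤ : ℕ∞)) (by simp)).clm_apply contDiff_const).differentiable (by simp)

include hψs in
lemma pd_Γe_y (b : Fin l) (i j : Idx k l) (p : Idx k l → ℝ) :
    pd (Sum.inr (Sum.inl b)) (Γe ψ Cinv (Sum.inr (Sum.inl b)) i j) p =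
      (match i, j with
       | .inl i, .inl j => ∑ a, Cinv b a *
           fderiv ℝ (dψ ψ a i j) (L k l p) (Pi.single b 1)
       | _, _ => 0) := by
  rcases i with i | (a | i) <;> rcases j with j | (a' | j) <;>
    try { exact pd_const _ 0 p }
  show pd _ (fun q => (fun y => ∑ a, Cinv b a * dψ ψ a i j y) (L k l q)) p = _
  have hcomp := pd_comp (k := k) (l := l) (fun y => ∑ a, Cinv b a * dψ ψ a i j y)
    (Differentiable.fun_sum fun a _ => ((dψ_diff ψ hψs a i j).const_mul _)) (Sum.inr (Sum.inl b)) p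
  rw [hcomp, L_single_y]
  rw [fderiv_fun_sum (fun a _ => ((dψ_diff ψ hψs a i j).differentiableAt.const_mul _))]
  rw [ContinuousLinearMap.sum_apply]
  refine Finset.sum_congr rfl fun a _ => ?_
  rw [fderiv_const_mul (dψ_diff ψ hψs a i j).differentiableAt]
  simp

include hψs in
lemma pd_Γe_xb (m : Fin k) (i j : Idx k l) (p : Idx k l → ℝ) :
    pd (Sum.inr (Sum.inr m)) (Γe ψ Cinv (Sum.inr (Sum.inr m)) i j) p = 0 := by
  rcases i with i | (a | i) <;> rcases j with j | (a' | j) <;>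
    try { exact pd_const _ 0 p }
  · show pd _ (fun q => (fun y => -(dψ ψ a' i m y)) (L k l q)) p = 0
    have hcomp := pd_comp (k := k) (l := l) (fun y => -(dψ ψ a' i m y))
      (dψ_diff ψ hψs a' i m).neg (Sum.inr (Sum.inr m)) p
    rw [hcomp, L_single_xb]
    simp
  · show pd _ (fun q => (fun y => -(dψ ψ a j m y)) (L k l q)) p = 0
    have hcomp := pd_comp (k := k) (l := l) (fun y => -(dψ ψ a j m y))
      (dψ_diff ψ hψs a j m).neg (Sum.inr (Sum.inr m)) p
    rw [hcomp, L_single_xb]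
    simp


include hψs in
lemma ricci_eq (ginv : (Idx k l → ℝ) → Matrix (Idx k l) (Idx k l) ℝ)
    (hg : ∀ p, ginv p = GinvM ψ Cinv p) (i j : Idx k l) (p : Idx k l → ℝ) :
    ricci (gPsi k l ψ C) ginv i j p =
      (match i, j with
       | .inl i, .inl j => ∑ b, ∑ a, Cinv b a *
           fderiv ℝ (dψ ψ a i j) (L k l p) (Pi.single b 1)
       | _, _ => 0) := by
  have hψ : ∀ i j, Differentiable ℝ fun y => ψ y i j :=
    fun i j => (hψs i j).differentiable (by simp)
  have hχ : ∀ m i j, christoffel (gPsi k l ψ C) ginv m i j = Γe ψ Cinv m i j :=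
    fun m i j => funext fun p => christoffel_eq ψ C Cinv hψ ginv hg m i j p
  unfold ricci curvOp
  simp only [hχ, Γe_diag, Γe_mul, pd_const, mul_zero, zero_mul, Finset.sum_const_zero,
    sub_zero, add_zero, zero_add]
  rw [Fintype.sum_sum_type, Fintype.sum_sum_type]
  have h1 : ∀ m : Fin k, pd (Sum.inl m) (Γe ψ Cinv (Sum.inl m) i j) p = 0 :=
    fun m => pd_const _ 0 p
  simp only [h1, pd_Γe_y ψ Cinv hψs, pd_Γe_xb ψ Cinv hψs, Finset.sum_const_zero,
    zero_add, add_zero]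
  rcases i with i | (a | i) <;> rcases j with j | (a' | j) <;> simp

end S12


/-- The manifold `(ℝ^{2k+l}, gPsi)` is Einstein (its Ricci tensor
is a constant multiple of the metric) if and only if
`C^{ab} ∂yₐ∂y_b ψᵢⱼ = 0` for all `i, j`. -/
theorem stmt_12 (k l : ℕ) (hk : 1 ≤ k) (hl : 1 ≤ l)
    (ψ : (Fin l → ℝ) → Matrix (Fin k) (Fin k) ℝ)
    (hψsmooth : ∀ i j, ContDiff ℝ (⊤ : ℕ∞) (fun y => ψ y i j))
    (hψsymm : ∀ y i j, ψ y i j = ψ y j i)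
    (C Cinv : Matrix (Fin l) (Fin l) ℝ) (hCsymm : C.IsSymm)
    (hC : C * Cinv = 1) (hC' : Cinv * C = 1)
    (ginv : ((Fin k ⊕ (Fin l ⊕ Fin k)) → ℝ) →
      Matrix (Fin k ⊕ (Fin l ⊕ Fin k)) (Fin k ⊕ (Fin l ⊕ Fin k)) ℝ)
    (hginv : ∀ p, gPsi k l ψ C p * ginv p = 1 ∧ ginv p * gPsi k l ψ C p = 1) :
    (∃ c : ℝ, ∀ (p : (Fin k ⊕ (Fin l ⊕ Fin k)) → ℝ)
        (i j : Fin k ⊕ (Fin l ⊕ Fin k)),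
        ricci (gPsi k l ψ C) ginv i j p = c * gPsi k l ψ C p i j) ↔
    (∀ (y : Fin l → ℝ) (i j : Fin k),
      ∑ a, ∑ b, Cinv a b *
        fderiv ℝ (fun z => fderiv ℝ (fun w => ψ w i j) z (Pi.single b 1)) y
          (Pi.single a 1) = 0) := by
  have hg : ∀ p, ginv p = S12.GinvM ψ Cinv p := S12.ginv_eq ψ C Cinv hC ginv hginv
  constructor
  · rintro ⟨c, h⟩ y i j
    have i0 : Fin k := ⟨0, hk⟩
    have hc : c = 0 := by
      have h0 := h (fun _ => 0) (Sum.inl i0) (Sum.inr (Sum.inr i0))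
      rw [S12.ricci_eq ψ C Cinv hψsmooth ginv hg] at h0
      simpa [gPsi] using h0.symm
    have h2 := h (Sum.elim (fun _ => 0) (Sum.elim y (fun _ => 0))) (Sum.inl i) (Sum.inl j)
    rw [S12.ricci_eq ψ C Cinv hψsmooth ginv hg, hc, zero_mul] at h2
    exact h2
  · intro h
    refine ⟨0, fun p i j => ?_⟩
    rw [S12.ricci_eq ψ C Cinv hψsmooth ginv hg, zero_mul]
    rcases i with i | v <;> rcases j with j | w
    · exact h (S12.L k l p) i j
    · rfl
    · rfl
    · rfl
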